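/- Let G be a nontrivial additive subgroup of ℂ and let λ ∈ ℂ with λ ∉ {0, 1, −1, −2}. Then every 1/2-derivation of the deformed generalized Heisenberg–Virasoro algebra g(G,λ) is a scalar multiple of the identity map. -/

import Mathlib

/-!
Put `x = L₀` in the `1/2`-derivation identity. Since `ad L₀` multiplies each basis vector of
degree `b` by `b`, the coefficient of a degree-`d` basis vector in `φ(x_b)` times `d - 2b`
equals the corresponding coefficient of `⁅x_b, φ L₀⁆`: away from the doubled degree `d = 2b`
every coefficient of `φ` is fixed by `φ(L₀)`. Comparing `C_L`-coordinates, where the Virasoro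
cocycle appears, shows that `φ(L₀)` has no `L_t`-component for `t ≠ 0`; two instances of the
identity on `(L_a, L_b)` at `I`-coordinates kill its `I`-components. The coefficients at doubled
degrees are then killed by one more instance of the identity with an auxiliary `c ∈ G` chosen off
finitely many bad values, which is possible because `G` is infinite. What survives is
`φ = κ • id`, with `κ` the `L₀`-coefficient of `φ(L₀)`.
-/

open scoped Classical

/-- Index set for the basis of the deformed generalized Heisenberg–Virasoro
algebra `g(G, λ)` (for `λ ∉ {0, 1, -2}`). -/
inductive DGHVIdx (G : AddSubgroup ℂ) : Type
  | L : G → DGHVIdx G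
  | I : G → DGHVIdx G
  | CL : DGHVIdx G

theorem Module.Basis.eq_smul_id_of_repr_eq_single {ι R M : Type*} [CommSemiring R]
    [AddCommMonoid M] [Module R M] (b : Module.Basis ι R M) (f : M →ₗ[R] M) (c : R)
    (h : ∀ i, b.repr (f (b i)) = Finsupp.single i c) : f = c • LinearMap.id :=
  b.ext fun i => b.repr.injective <| by simp [h]

theorem Module.Basis.repr_lie_apply_eq_of_forall {ι R M : Type*} [CommRing R] [LieRing M]
    [LieAlgebra R M] (b : Module.Basis ι R M) (y : M) {j k : ι} {c : R}
    (h : ∀ i, b.repr ⁅y, b i⁆ j = c * b.repr (b i) k) (x : M) :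
    b.repr ⁅y, x⁆ j = c * b.repr x k := by
  have := b.ext (f₁ := (b.coord j).comp (LieAlgebra.ad R M y)) (f₂ := c • b.coord k)
    (by simpa using h)
  simpa using LinearMap.congr_fun this x

theorem AddSubgroup.exists_coe_notMem_finset {M : Type*} [AddCommGroup M] [IsAddTorsionFree M]
    (G : AddSubgroup M) [Nontrivial G] (s : Finset M) : ∃ a : G, (a : M) ∉ s := by
  obtain ⟨e, he⟩ := exists_ne (0 : G)
  have hrange := (infinite_range_add_nsmul_iff (0 : G) e).2 he
  have : Infinite G := Set.infinite_univ_iff.mp (hrange.mono (Set.subset_univ _))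
  simpa using
    Infinite.exists_notMem_finset (s.preimage ((↑) : G → M) Subtype.val_injective.injOn)

def IsHalfDerivation (R : Type*) {L : Type*} [Field R] [LieRing L] [LieAlgebra R L]
    (φ : L →ₗ[R] L) : Prop :=
  ∀ x y, φ ⁅x, y⁆ = (1 / 2 : R) • (⁅φ x, y⁆ + ⁅x, φ y⁆)

theorem IsHalfDerivation.repr_apply_lie {ι R L : Type*} [Field R] [LieRing L] [LieAlgebra R L]
    {φ : L →ₗ[R] L} (hφ : IsHalfDerivation R φ) (b : Module.Basis ι R L) (x y : L)
    (j : ι) :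
    b.repr (φ ⁅x, y⁆) j = 1 / 2 * (b.repr ⁅x, φ y⁆ j - b.repr ⁅y, φ x⁆ j) := by
  rw [hφ, ← lie_skew y]
  simp only [map_smul, map_add, map_neg, Finsupp.smul_apply, Finsupp.add_apply,
    Finsupp.neg_apply, smul_eq_mul]
  ring

open DGHVIdx

namespace DGHV

variable {G : AddSubgroup ℂ} {Lg : Type*} [LieRing Lg] [LieAlgebra ℂ Lg] {lam : ℂ}
  {bas : Module.Basis (DGHVIdx G) ℂ Lg} {φ : Lg →ₗ[ℂ] Lg}

structure IsDGHVBasis (lam : ℂ) (bas : Module.Basis (DGHVIdx G) ℂ Lg) : Prop where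
  lie_L_L : ∀ a b : G, ⁅bas (L a), bas (L b)⁆ = ((b : ℂ) - (a : ℂ)) • bas (L (a + b)) +
    (if a + b = 0 then ((a : ℂ) ^ 3 - (a : ℂ)) / 12 else 0) • bas CL
  lie_L_I : ∀ a b : G,
    ⁅bas (L a), bas (I b)⁆ = ((b : ℂ) - lam * (a : ℂ)) • bas (I (a + b))
  lie_I_I : ∀ a b : G, ⁅bas (I a), bas (I b)⁆ = 0
  lie_CL : ∀ x : Lg, ⁅bas CL, x⁆ = 0

namespace IsDGHVBasis

theorem lie_CL_right (h : IsDGHVBasis lam bas) (x : Lg) : ⁅x, bas CL⁆ = 0 := by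
  rw [← lie_skew, h.lie_CL, neg_zero]

theorem lie_I_L (h : IsDGHVBasis lam bas) (a b : G) :
    ⁅bas (I b), bas (L a)⁆ = -(((b : ℂ) - lam * (a : ℂ)) • bas (I (a + b))) := by
  rw [← lie_skew, h.lie_L_I]

theorem repr_lie_L_L (h : IsDGHVBasis lam bas) (b d : G) (x : Lg) :
    bas.repr ⁅bas (L b), x⁆ (L d) = ((d : ℂ) - 2 * b) * bas.repr x (L (d - b)) := by
  refine bas.repr_lie_apply_eq_of_forall _ (fun i => ?_) x
  cases i with
  | L a =>
    rcases eq_or_ne a (d - b) with rfl | hne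
    · simp [h.lie_L_L, ite_smul, apply_ite bas.repr, DFunLike.ite_apply]
      ring
    · simp [h.lie_L_L, ite_smul, apply_ite bas.repr, DFunLike.ite_apply, ← eq_sub_iff_add_eq',
        hne]
  | I a => simp [h.lie_L_I]
  | CL => simp [h.lie_CL_right]

theorem repr_lie_L_I (h : IsDGHVBasis lam bas) (b d : G) (x : Lg) :
    bas.repr ⁅bas (L b), x⁆ (I d) = ((d : ℂ) - b - lam * b) * bas.repr x (I (d - b)) := by
  refine bas.repr_lie_apply_eq_of_forall _ (fun i => ?_) x
  cases i with
  | L a => simp [h.lie_L_L, ite_smul, apply_ite bas.repr, DFunLike.ite_apply]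
  | I a =>
    rcases eq_or_ne a (d - b) with rfl | hne
    · simp [h.lie_L_I]
    · simp [h.lie_L_I, ← eq_sub_iff_add_eq', hne]
  | CL => simp [h.lie_CL_right]

theorem repr_lie_L_CL (h : IsDGHVBasis lam bas) (b : G) (x : Lg) :
    bas.repr ⁅bas (L b), x⁆ CL = (((b : ℂ) ^ 3 - b) / 12) * bas.repr x (L (-b)) := by
  refine bas.repr_lie_apply_eq_of_forall _ (fun i => ?_) x
  cases i with
  | L a =>
    rcases eq_or_ne a (-b) with rfl | hne
    · simp [h.lie_L_L]
    · simp [h.lie_L_L, ← eq_neg_iff_add_eq_zero, add_comm b, hne]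
  | I a => simp [h.lie_L_I]
  | CL => simp [h.lie_CL_right]

theorem repr_lie_I_I (h : IsDGHVBasis lam bas) (b d : G) (x : Lg) :
    bas.repr ⁅bas (I b), x⁆ (I d) = (lam * ((d : ℂ) - b) - b) * bas.repr x (L (d - b)) := by
  refine bas.repr_lie_apply_eq_of_forall _ (fun i => ?_) x
  cases i with
  | L a =>
    rcases eq_or_ne a (d - b) with rfl | hne
    · simp [h.lie_I_L]
    · simp [h.lie_I_L, ← eq_sub_iff_add_eq, hne]
  | I a => simp [h.lie_I_I]
  | CL => simp [h.lie_CL_right]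

theorem repr_lie_I_L (h : IsDGHVBasis lam bas) (b d : G) (x : Lg) :
    bas.repr ⁅bas (I b), x⁆ (L d) = 0 := by
  simpa using bas.repr_lie_apply_eq_of_forall _ (j := L d) (k := L d) (c := 0) (fun i => by
    cases i <;> simp [h.lie_I_L, h.lie_I_I, h.lie_CL_right]) x

theorem repr_lie_I_CL (h : IsDGHVBasis lam bas) (b : G) (x : Lg) :
    bas.repr ⁅bas (I b), x⁆ CL = 0 := by
  simpa using bas.repr_lie_apply_eq_of_forall _ (j := CL) (k := CL) (c := 0) (fun i => by
    cases i <;> simp [h.lie_I_L, h.lie_I_I, h.lie_CL_right]) x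

end IsDGHVBasis

theorem coord_L_of_LL (h : IsDGHVBasis lam bas) (hφ : IsHalfDerivation ℂ φ) (a b d : G) :
    ((b : ℂ) - a) * bas.repr (φ (bas (L (a + b)))) (L d) +
        (if a + b = 0 then ((a : ℂ) ^ 3 - a) / 12 else 0) * bas.repr (φ (bas CL)) (L d) =
      1 / 2 * (((d : ℂ) - 2 * a) * bas.repr (φ (bas (L b))) (L (d - a)) -
        ((d : ℂ) - 2 * b) * bas.repr (φ (bas (L a))) (L (d - b))) := by
  have := hφ.repr_apply_lie bas (bas (L a)) (bas (L b)) (L d)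
  simpa only [h.lie_L_L, map_add, map_smul, Finsupp.add_apply, Finsupp.smul_apply, smul_eq_mul,
    h.repr_lie_L_L] using this

theorem coord_I_of_LL (h : IsDGHVBasis lam bas) (hφ : IsHalfDerivation ℂ φ) (a b d : G) :
    ((b : ℂ) - a) * bas.repr (φ (bas (L (a + b)))) (I d) +
        (if a + b = 0 then ((a : ℂ) ^ 3 - a) / 12 else 0) * bas.repr (φ (bas CL)) (I d) =
      1 / 2 * (((d : ℂ) - a - lam * a) * bas.repr (φ (bas (L b))) (I (d - a)) -
        ((d : ℂ) - b - lam * b) * bas.repr (φ (bas (L a))) (I (d - b))) := by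
  have := hφ.repr_apply_lie bas (bas (L a)) (bas (L b)) (I d)
  simpa only [h.lie_L_L, map_add, map_smul, Finsupp.add_apply, Finsupp.smul_apply, smul_eq_mul,
    h.repr_lie_L_I] using this

theorem coord_CL_of_LL (h : IsDGHVBasis lam bas) (hφ : IsHalfDerivation ℂ φ) (a b : G) :
    ((b : ℂ) - a) * bas.repr (φ (bas (L (a + b)))) CL +
        (if a + b = 0 then ((a : ℂ) ^ 3 - a) / 12 else 0) * bas.repr (φ (bas CL)) CL =
      1 / 2 * (((a : ℂ) ^ 3 - a) / 12 * bas.repr (φ (bas (L b))) (L (-a)) -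
        ((b : ℂ) ^ 3 - b) / 12 * bas.repr (φ (bas (L a))) (L (-b))) := by
  have := hφ.repr_apply_lie bas (bas (L a)) (bas (L b)) CL
  simpa only [h.lie_L_L, map_add, map_smul, Finsupp.add_apply, Finsupp.smul_apply, smul_eq_mul,
    h.repr_lie_L_CL] using this

theorem coord_L_of_LI (h : IsDGHVBasis lam bas) (hφ : IsHalfDerivation ℂ φ) (a b d : G) :
    ((b : ℂ) - lam * a) * bas.repr (φ (bas (I (a + b)))) (L d) =
      1 / 2 * (((d : ℂ) - 2 * a) * bas.repr (φ (bas (I b))) (L (d - a))) := by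
  have := hφ.repr_apply_lie bas (bas (L a)) (bas (I b)) (L d)
  simpa only [h.lie_L_I, map_smul, Finsupp.smul_apply, smul_eq_mul, h.repr_lie_L_L,
    h.repr_lie_I_L, sub_zero] using this

theorem coord_I_of_LI (h : IsDGHVBasis lam bas) (hφ : IsHalfDerivation ℂ φ) (a b d : G) :
    ((b : ℂ) - lam * a) * bas.repr (φ (bas (I (a + b)))) (I d) =
      1 / 2 * (((d : ℂ) - a - lam * a) * bas.repr (φ (bas (I b))) (I (d - a)) -
        (lam * ((d : ℂ) - b) - b) * bas.repr (φ (bas (L a))) (L (d - b))) := by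
  have := hφ.repr_apply_lie bas (bas (L a)) (bas (I b)) (I d)
  simpa only [h.lie_L_I, map_smul, Finsupp.smul_apply, smul_eq_mul, h.repr_lie_L_I,
    h.repr_lie_I_I] using this

theorem coord_CL_of_LI (h : IsDGHVBasis lam bas) (hφ : IsHalfDerivation ℂ φ) (a b : G) :
    ((b : ℂ) - lam * a) * bas.repr (φ (bas (I (a + b)))) CL =
      1 / 2 * (((a : ℂ) ^ 3 - a) / 12 * bas.repr (φ (bas (I b))) (L (-a))) := by
  have := hφ.repr_apply_lie bas (bas (L a)) (bas (I b)) CL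
  simpa only [h.lie_L_I, map_smul, Finsupp.smul_apply, smul_eq_mul, h.repr_lie_L_CL,
    h.repr_lie_I_CL, sub_zero] using this

theorem coord_I_of_II (h : IsDGHVBasis lam bas) (hφ : IsHalfDerivation ℂ φ) (a b d : G) :
    (lam * ((d : ℂ) - a) - a) * bas.repr (φ (bas (I b))) (L (d - a)) =
      (lam * ((d : ℂ) - b) - b) * bas.repr (φ (bas (I a))) (L (d - b)) := by
  have := hφ.repr_apply_lie bas (bas (I a)) (bas (I b)) (I d)
  simp only [h.lie_I_I, map_zero, Finsupp.zero_apply, h.repr_lie_I_I] at this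
  linear_combination -2 * this

theorem lie_L_apply_CL (h : IsDGHVBasis lam bas) (hφ : IsHalfDerivation ℂ φ) (a : G) :
    ⁅bas (L a), φ (bas CL)⁆ = 0 := by
  have := hφ (bas (L a)) (bas CL)
  rwa [h.lie_CL_right, h.lie_CL_right, map_zero, zero_add, eq_comm, smul_eq_zero,
    or_iff_right (by norm_num)] at this

theorem repr_L_L_eq_repr_L_zero (h : IsDGHVBasis lam bas) (hφ : IsHalfDerivation ℂ φ) (b d : G)
    (hd : (d : ℂ) ≠ 2 * b) :
    bas.repr (φ (bas (L b))) (L d) = bas.repr (φ (bas (L 0))) (L (d - b)) := by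
  have := coord_L_of_LL h hφ 0 b d
  simp only [zero_add, sub_zero, ZeroMemClass.coe_zero, mul_zero, ne_eq, OfNat.ofNat_ne_zero,
    not_false_eq_true, zero_pow, zero_div, ite_self, zero_mul, add_zero] at this
  refine mul_left_cancel₀ (sub_ne_zero.2 hd) ?_
  linear_combination (-2 : ℂ) * this

theorem repr_L_zero_L_of_ne_zero [Nontrivial G] (h : IsDGHVBasis lam bas)
    (hφ : IsHalfDerivation ℂ φ) {t : G} (ht : t ≠ 0) :
    bas.repr (φ (bas (L 0))) (L t) = 0 := by
  have htC : (t : ℂ) ≠ 0 := by simpa using ht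
  obtain ⟨a, ha⟩ :=
    G.exists_coe_notMem_finset {0, (t : ℂ), -(t : ℂ), -(t : ℂ) / 2, -2 * (t : ℂ)}
  simp only [Finset.mem_insert, Finset.mem_singleton, not_or] at ha
  obtain ⟨ha0, hat, hamt, hamt2, ham2t⟩ := ha
  have h1 := coord_CL_of_LL h hφ 0 (-t)
  have h2 := coord_CL_of_LL h hφ a (-t - a)
  rw [repr_L_L_eq_repr_L_zero h hφ (-t - a) (-a)
      (by push_cast; intro hc; exact ham2t (by linear_combination hc)),
    repr_L_L_eq_repr_L_zero h hφ a (-(-t - a))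
      (by push_cast; intro hc; exact hat (by linear_combination -hc)),
    show -a - (-t - a) = t by abel, show -(-t - a) - a = t by abel] at h2
  rw [zero_add, if_neg (neg_ne_zero.mpr ht), neg_neg] at h1
  rw [add_sub_cancel, if_neg (neg_ne_zero.mpr ht)] at h2
  push_cast at h1 h2
  have key : (a : ℂ) * t * (t + a) * (t + 2 * a) * bas.repr (φ (bas (L 0))) (L t) = 0 := by
    linear_combination (24 * ((t : ℂ) + 2 * a)) * h1 - (24 * (t : ℂ)) * h2
  refine (mul_eq_zero.mp key).resolve_left ?_
  refine mul_ne_zero (mul_ne_zero (mul_ne_zero ha0 htC) ?_) ?_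
  · intro hc; exact hamt (by linear_combination hc)
  · intro hc; exact hamt2 (by linear_combination hc / 2)

theorem repr_L_L_add_self [Nontrivial G] (h : IsDGHVBasis lam bas) (hφ : IsHalfDerivation ℂ φ)
    {a : G} (ha : a ≠ 0) : bas.repr (φ (bas (L a))) (L (a + a)) = 0 := by
  obtain ⟨b, hb⟩ := G.exists_coe_notMem_finset {0, (a : ℂ), -(a : ℂ), 2 * (a : ℂ)}
  simp only [Finset.mem_insert, Finset.mem_singleton, not_or] at hb
  obtain ⟨hb0, hba, hbma, hb2a⟩ := hb
  have hab : a + b ≠ 0 :=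
    Subtype.coe_ne_coe.mp (by push_cast; intro hc; exact hbma (by linear_combination hc))
  have := coord_L_of_LL h hφ a b (a + a + b)
  rw [if_neg hab, repr_L_L_eq_repr_L_zero h hφ (a + b) (a + a + b)
      (by push_cast; intro hc; exact hb0 (by linear_combination -hc)),
    show a + a + b - a = a + b by abel, show a + a + b - b = a + a by abel,
    repr_L_L_eq_repr_L_zero h hφ b (a + b)
      (by push_cast; intro hc; exact hba (by linear_combination -hc)),
    show a + a + b - (a + b) = a by abel, show a + b - b = a by abel,
    repr_L_zero_L_of_ne_zero h hφ ha] at this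
  push_cast at this
  have key : (2 * (a : ℂ) - b) * bas.repr (φ (bas (L a))) (L (a + a)) = 0 := by
    linear_combination 2 * this
  exact (mul_eq_zero.mp key).resolve_left fun hc => hb2a (by linear_combination -hc)

theorem repr_L_L_self (h : IsDGHVBasis lam bas) (hφ : IsHalfDerivation ℂ φ) (b : G) :
    bas.repr (φ (bas (L b))) (L b) = bas.repr (φ (bas (L 0))) (L 0) := by
  rcases eq_or_ne b 0 with rfl | hb
  · rfl
  have hbC : (b : ℂ) ≠ 0 := by simpa using hb
  rw [repr_L_L_eq_repr_L_zero h hφ b b fun hc => hbC (by linear_combination -hc), sub_self]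

theorem repr_L_L_of_ne [Nontrivial G] (h : IsDGHVBasis lam bas) (hφ : IsHalfDerivation ℂ φ)
    {b d : G} (hbd : b ≠ d) : bas.repr (φ (bas (L b))) (L d) = 0 := by
  by_cases hd : (d : ℂ) = 2 * b
  · obtain rfl : d = b + b := Subtype.ext (by push_cast; linear_combination hd)
    exact repr_L_L_add_self h hφ (by rintro rfl; simp at hbd)
  · rw [repr_L_L_eq_repr_L_zero h hφ b d hd]
    exact repr_L_zero_L_of_ne_zero h hφ (sub_ne_zero.mpr hbd.symm)

theorem coord_CL_of_L_neg (h : IsDGHVBasis lam bas) (hφ : IsHalfDerivation ℂ φ) (a : G) :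
    -2 * (a : ℂ) * bas.repr (φ (bas (L 0))) CL +
        ((a : ℂ) ^ 3 - a) / 12 * bas.repr (φ (bas CL)) CL =
      ((a : ℂ) ^ 3 - a) / 12 * bas.repr (φ (bas (L 0))) (L 0) := by
  have := coord_CL_of_LL h hφ a (-a)
  rw [add_neg_cancel, if_pos rfl, neg_neg, repr_L_L_self h hφ a, repr_L_L_self h hφ (-a)] at this
  push_cast at this
  linear_combination this

theorem repr_CL_CL [Nontrivial G] (h : IsDGHVBasis lam bas) (hφ : IsHalfDerivation ℂ φ) :
    bas.repr (φ (bas CL)) CL = bas.repr (φ (bas (L 0))) (L 0) := by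
  obtain ⟨e, he⟩ := exists_ne (0 : G)
  have heC : (e : ℂ) ≠ 0 := by simpa using he
  have h1 := coord_CL_of_L_neg h hφ e
  have h2 := coord_CL_of_L_neg h hφ (2 • e)
  push_cast [nsmul_eq_mul] at h2
  refine mul_left_cancel₀ (by simpa using heC : (e : ℂ) ^ 3 / 2 ≠ 0) ?_
  linear_combination h2 - 2 * h1

theorem repr_L_zero_CL [Nontrivial G] (h : IsDGHVBasis lam bas) (hφ : IsHalfDerivation ℂ φ) :
    bas.repr (φ (bas (L 0))) CL = 0 := by
  obtain ⟨e, he⟩ := exists_ne (0 : G)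
  have heC : (e : ℂ) ≠ 0 := by simpa using he
  have := coord_CL_of_L_neg h hφ e
  rw [repr_CL_CL h hφ] at this
  exact (mul_eq_zero.mp (by linear_combination this)).resolve_left
    (mul_ne_zero (by norm_num) heC : -2 * (e : ℂ) ≠ 0)

theorem repr_L_CL [Nontrivial G] (h : IsDGHVBasis lam bas) (hφ : IsHalfDerivation ℂ φ) (s : G) :
    bas.repr (φ (bas (L s))) CL = 0 := by
  rcases eq_or_ne s 0 with rfl | hs
  · exact repr_L_zero_CL h hφ
  have := coord_CL_of_LL h hφ 0 s
  rw [zero_add, if_neg hs,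
    repr_L_L_of_ne h hφ (b := 0) (d := -s) (by simpa [eq_comm] using hs)] at this
  push_cast at this
  have key : (s : ℂ) * bas.repr (φ (bas (L s))) CL = 0 := by linear_combination this
  exact (mul_eq_zero.mp key).resolve_left (by simpa using hs)

theorem repr_L_I_degree (h : IsDGHVBasis lam bas) (hφ : IsHalfDerivation ℂ φ) (b d : G) :
    ((d : ℂ) - 2 * b) * bas.repr (φ (bas (L b))) (I d) =
      ((d : ℂ) - b - lam * b) * bas.repr (φ (bas (L 0))) (I (d - b)) := by
  have := coord_I_of_LL h hφ 0 b d
  simp only [zero_add, sub_zero, ZeroMemClass.coe_zero, mul_zero, ne_eq, OfNat.ofNat_ne_zero,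
    not_false_eq_true, zero_pow, zero_div, ite_self, zero_mul, add_zero] at this
  linear_combination (-2 : ℂ) * this

theorem repr_L_I_self (h : IsDGHVBasis lam bas) (hφ : IsHalfDerivation ℂ φ) {b : G}
    (hb : b ≠ 0) :
    bas.repr (φ (bas (L b))) (I b) = lam * bas.repr (φ (bas (L 0))) (I 0) := by
  have hbC : (b : ℂ) ≠ 0 := by simpa using hb
  have := repr_L_I_degree h hφ b b
  simp only [sub_self] at this
  exact mul_left_cancel₀ (neg_ne_zero.mpr hbC) (by linear_combination this)

theorem repr_L_zero_I_zero [Nontrivial G] (h : IsDGHVBasis lam bas) (hφ : IsHalfDerivation ℂ φ)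
    (hlam0 : lam ≠ 0) (hlam1 : lam ≠ 1) : bas.repr (φ (bas (L 0))) (I 0) = 0 := by
  obtain ⟨e, he⟩ := exists_ne (0 : G)
  have heC : (e : ℂ) ≠ 0 := by simpa using he
  have := coord_I_of_LL h hφ e (2 • e) (3 • e)
  rw [show e + 2 • e = 3 • e by abel, if_neg (smul_ne_zero three_ne_zero he),
    show 3 • e - e = 2 • e by abel, show 3 • e - 2 • e = e by abel,
    repr_L_I_self h hφ (smul_ne_zero three_ne_zero he),
    repr_L_I_self h hφ (smul_ne_zero two_ne_zero he),
    repr_L_I_self h hφ he] at this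
  push_cast at this
  have key : (e : ℂ) * lam * (1 - lam) * bas.repr (φ (bas (L 0))) (I 0) = 0 := by
    linear_combination 2 * this
  refine (mul_eq_zero.mp key).resolve_left (mul_ne_zero (mul_ne_zero heC hlam0) ?_)
  exact sub_ne_zero.mpr (Ne.symm hlam1)

theorem repr_L_zero_I_of_ne_zero (h : IsDGHVBasis lam bas) (hφ : IsHalfDerivation ℂ φ)
    (hlam1 : lam ≠ 1) {t : G} (ht : t ≠ 0) : bas.repr (φ (bas (L 0))) (I t) = 0 := by
  have htC : (t : ℂ) ≠ 0 := by simpa using ht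
  set β := bas.repr (φ (bas (L 0))) (I t)
  have shift (k : ℤ) : (1 - k) * bas.repr (φ (bas (L (k • t)))) (I ((k + 1) • t)) =
      (1 - lam * k) * β := by
    have := repr_L_I_degree h hφ (k • t) ((k + 1) • t)
    rw [show (k + 1) • t - k • t = t by rw [add_smul, one_smul, add_sub_cancel_left]] at this
    push_cast at this
    exact mul_left_cancel₀ htC (by linear_combination this)
  have M1 := coord_I_of_LL h hφ ((2 : ℤ) • t) ((3 : ℤ) • t) ((6 : ℤ) • t)
  rw [← add_smul, if_neg (smul_ne_zero (by norm_num) ht), ← sub_smul, ← sub_smul] at M1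
  have M2 := coord_I_of_LL h hφ ((3 : ℤ) • t) ((-1 : ℤ) • t) ((3 : ℤ) • t)
  rw [← add_smul, if_neg (smul_ne_zero (by norm_num) ht), ← sub_smul, ← sub_smul] at M2
  have s2 := shift 2
  have s3 := shift 3
  have s5 := shift 5
  have sm1 := shift (-1)
  norm_num at M1 M2 s2 s3 s5 sm1
  have key1 : (t : ℂ) * (6 * lam ^ 2 - 9 * lam + 3) * β = 0 := by
    linear_combination -4 * M1 - t * s5 + (4 - 2 * lam) * t * s3 - 2 * (3 - 3 * lam) * t * s2
  have key2 : (t : ℂ) * (6 * lam ^ 2 - 18 * lam + 12) * β = 0 := by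
    linear_combination 4 * M2 - 3 * lam * t * sm1 + (4 + lam) * t * s3 - 16 * t * s2
  have key : (t : ℂ) * (9 * (lam - 1)) * β = 0 := by linear_combination key1 - key2
  exact (mul_eq_zero.mp key).resolve_left
    (mul_ne_zero htC (mul_ne_zero (by norm_num) (sub_ne_zero.mpr hlam1)))

theorem repr_L_zero_I [Nontrivial G] (h : IsDGHVBasis lam bas) (hφ : IsHalfDerivation ℂ φ)
    (hlam0 : lam ≠ 0) (hlam1 : lam ≠ 1) (t : G) : bas.repr (φ (bas (L 0))) (I t) = 0 := by
  rcases eq_or_ne t 0 with rfl | ht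
  · exact repr_L_zero_I_zero h hφ hlam0 hlam1
  · exact repr_L_zero_I_of_ne_zero h hφ hlam1 ht

theorem repr_L_I_of_ne_two_mul [Nontrivial G] (h : IsDGHVBasis lam bas)
    (hφ : IsHalfDerivation ℂ φ) (hlam0 : lam ≠ 0) (hlam1 : lam ≠ 1) {b d : G}
    (hd : (d : ℂ) ≠ 2 * b) :
    bas.repr (φ (bas (L b))) (I d) = 0 := by
  have := repr_L_I_degree h hφ b d
  rw [repr_L_zero_I h hφ hlam0 hlam1, mul_zero] at this
  exact (mul_eq_zero.mp this).resolve_left (sub_ne_zero.mpr hd)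

theorem repr_L_I [Nontrivial G] (h : IsDGHVBasis lam bas) (hφ : IsHalfDerivation ℂ φ)
    (hlam0 : lam ≠ 0) (hlam1 : lam ≠ 1) (b d : G) : bas.repr (φ (bas (L b))) (I d) = 0 := by
  by_cases hd : (d : ℂ) = 2 * b
  swap
  · exact repr_L_I_of_ne_two_mul h hφ hlam0 hlam1 hd
  obtain rfl : d = b + b := Subtype.ext (by push_cast; linear_combination hd)
  obtain ⟨c, hc⟩ := G.exists_coe_notMem_finset {0, (b : ℂ), -(b : ℂ), 2 * (b : ℂ) / lam}
  simp only [Finset.mem_insert, Finset.mem_singleton, not_or] at hc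
  obtain ⟨hc0, hcb, hcmb, hc2b⟩ := hc
  have hbc : b + c ≠ 0 :=
    Subtype.coe_ne_coe.mp (by push_cast; intro hx; exact hcmb (by linear_combination hx))
  have := coord_I_of_LL h hφ b c (b + b + c)
  rw [if_neg hbc, show b + b + c - b = b + c by abel, show b + b + c - c = b + b by abel,
    repr_L_I_of_ne_two_mul h hφ hlam0 hlam1 (b := b + c) (d := b + b + c)
      (by push_cast; intro hx; exact hc0 (by linear_combination -hx)),
    repr_L_I_of_ne_two_mul h hφ hlam0 hlam1 (b := c) (d := b + c)
      (by push_cast; intro hx; exact hcb (by linear_combination -hx))] at this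
  push_cast at this
  have key : (2 * (b : ℂ) - lam * c) * bas.repr (φ (bas (L b))) (I (b + b)) = 0 := by
    linear_combination 2 * this
  refine (mul_eq_zero.mp key).resolve_left fun hx => hc2b ?_
  rw [eq_div_iff hlam0]
  linear_combination -hx

theorem repr_CL_L [Nontrivial G] (h : IsDGHVBasis lam bas) (hφ : IsHalfDerivation ℂ φ) (c : G) :
    bas.repr (φ (bas CL)) (L c) = 0 := by
  obtain ⟨a, ha⟩ := G.exists_coe_notMem_finset {(c : ℂ)}
  have := congrArg (bas.repr · (L (c + a))) (lie_L_apply_CL h hφ a)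
  simp only [h.repr_lie_L_L, add_sub_cancel_right, map_zero, Finsupp.zero_apply] at this
  push_cast at this
  exact (mul_eq_zero.mp this).resolve_left fun hx =>
    ha (Finset.mem_singleton.mpr (by linear_combination -hx))

theorem repr_CL_I [Nontrivial G] (h : IsDGHVBasis lam bas) (hφ : IsHalfDerivation ℂ φ)
    (hlam0 : lam ≠ 0) (c : G) : bas.repr (φ (bas CL)) (I c) = 0 := by
  obtain ⟨a, ha⟩ := G.exists_coe_notMem_finset {(c : ℂ) / lam}
  have := congrArg (bas.repr · (I (c + a))) (lie_L_apply_CL h hφ a)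
  simp only [h.repr_lie_L_I, add_sub_cancel_right, map_zero, Finsupp.zero_apply] at this
  push_cast at this
  refine (mul_eq_zero.mp this).resolve_left fun hx => ha (Finset.mem_singleton.mpr ?_)
  rw [eq_div_iff hlam0]
  linear_combination -hx

theorem repr_I_L_of_ne_two_mul (h : IsDGHVBasis lam bas) (hφ : IsHalfDerivation ℂ φ) {b d : G}
    (hd : (d : ℂ) ≠ 2 * b) : bas.repr (φ (bas (I b))) (L d) = 0 := by
  have := coord_L_of_LI h hφ 0 b d
  simp only [zero_add, sub_zero, ZeroMemClass.coe_zero, mul_zero] at this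
  have key : ((d : ℂ) - 2 * b) * bas.repr (φ (bas (I b))) (L d) = 0 := by
    linear_combination -2 * this
  exact (mul_eq_zero.mp key).resolve_left (sub_ne_zero.mpr hd)

theorem repr_I_L [Nontrivial G] (h : IsDGHVBasis lam bas) (hφ : IsHalfDerivation ℂ φ)
    (b d : G) : bas.repr (φ (bas (I b))) (L d) = 0 := by
  by_cases hd : (d : ℂ) = 2 * b
  swap
  · exact repr_I_L_of_ne_two_mul h hφ hd
  obtain rfl : d = b + b := Subtype.ext (by push_cast; linear_combination hd)
  obtain ⟨c, hc⟩ := G.exists_coe_notMem_finset {(b : ℂ), 2 * lam * b}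
  simp only [Finset.mem_insert, Finset.mem_singleton, not_or] at hc
  obtain ⟨hcb, hc2b⟩ := hc
  have := coord_I_of_II h hφ c b (c + b + b)
  rw [show c + b + b - c = b + b by abel, show c + b + b - b = c + b by abel,
    repr_I_L_of_ne_two_mul h hφ (b := c) (d := c + b)
      (by push_cast; intro hx; exact hcb (by linear_combination -hx)), mul_zero] at this
  push_cast at this
  refine (mul_eq_zero.mp this).resolve_left fun hx => hc2b ?_
  linear_combination -hx

theorem repr_I_I_degree (h : IsDGHVBasis lam bas) (hφ : IsHalfDerivation ℂ φ) (b d : G) :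
    ((d : ℂ) - 2 * b) * bas.repr (φ (bas (I b))) (I d) =
      (lam * ((d : ℂ) - b) - b) * bas.repr (φ (bas (L 0))) (L (d - b)) := by
  have := coord_I_of_LI h hφ 0 b d
  simp only [zero_add, sub_zero, ZeroMemClass.coe_zero, mul_zero] at this
  linear_combination -2 * this

theorem repr_I_I_self [Nontrivial G] (h : IsDGHVBasis lam bas) (hφ : IsHalfDerivation ℂ φ)
    (hlam0 : lam ≠ 0) (b : G) :
    bas.repr (φ (bas (I b))) (I b) = bas.repr (φ (bas (L 0))) (L 0) := by
  have of_ne_zero {b : G} (hb : b ≠ 0) :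
      bas.repr (φ (bas (I b))) (I b) = bas.repr (φ (bas (L 0))) (L 0) := by
    have hbC : (b : ℂ) ≠ 0 := by simpa using hb
    have := repr_I_I_degree h hφ b b
    simp only [sub_self] at this
    exact mul_left_cancel₀ (neg_ne_zero.mpr hbC) (by linear_combination this)
  rcases eq_or_ne b 0 with rfl | hb
  · obtain ⟨e, he⟩ := exists_ne (0 : G)
    have heC : (e : ℂ) ≠ 0 := by simpa using he
    have := coord_I_of_LI h hφ e 0 e
    simp only [add_zero, sub_self, sub_zero] at this
    rw [of_ne_zero he, repr_L_L_self h hφ e] at this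
    push_cast at this
    exact mul_left_cancel₀ (mul_ne_zero hlam0 heC) (by linear_combination 2 * this)
  · exact of_ne_zero hb

theorem repr_I_I_of_ne [Nontrivial G] (h : IsDGHVBasis lam bas) (hφ : IsHalfDerivation ℂ φ)
    (hlam0 : lam ≠ 0) {b d : G} (hbd : b ≠ d) : bas.repr (φ (bas (I b))) (I d) = 0 := by
  have of_ne_two_mul {b d : G} (hbd : b ≠ d) (hd : (d : ℂ) ≠ 2 * b) :
      bas.repr (φ (bas (I b))) (I d) = 0 := by
    have := repr_I_I_degree h hφ b d
    rw [repr_L_L_of_ne h hφ (b := 0) (d := d - b) (sub_ne_zero.mpr hbd.symm).symm,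
      mul_zero] at this
    exact (mul_eq_zero.mp this).resolve_left (sub_ne_zero.mpr hd)
  by_cases hd : (d : ℂ) = 2 * b
  swap
  · exact of_ne_two_mul hbd hd
  obtain rfl : d = b + b := Subtype.ext (by push_cast; linear_combination hd)
  have hb : b ≠ 0 := by rintro rfl; simp at hbd
  obtain ⟨a, ha⟩ := G.exists_coe_notMem_finset {0, 2 * (b : ℂ) / lam}
  simp only [Finset.mem_insert, Finset.mem_singleton, not_or] at ha
  obtain ⟨ha0, ha2b⟩ := ha
  have := coord_I_of_LI h hφ a b (a + b + b)
  rw [show a + b + b - a = b + b by abel, show a + b + b - b = a + b by abel,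
    of_ne_two_mul (b := a + b) (d := a + b + b) (by simpa using hb)
      (by push_cast; intro hx; exact ha0 (by linear_combination -hx)),
    repr_L_L_of_ne h hφ (b := a) (d := a + b) (by simpa using hb), mul_zero] at this
  push_cast at this
  have key : (2 * (b : ℂ) - lam * a) * bas.repr (φ (bas (I b))) (I (b + b)) = 0 := by
    linear_combination -2 * this
  refine (mul_eq_zero.mp key).resolve_left fun hx => ha2b ?_
  rw [eq_div_iff hlam0]
  linear_combination -hx

theorem repr_I_CL [Nontrivial G] (h : IsDGHVBasis lam bas) (hφ : IsHalfDerivation ℂ φ)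
    (hlamm1 : lam ≠ -1) (s : G) : bas.repr (φ (bas (I s))) CL = 0 := by
  have hlam : 1 + lam ≠ 0 := fun hx => hlamm1 (by linear_combination hx)
  obtain ⟨a, ha⟩ := G.exists_coe_notMem_finset {(s : ℂ) / (1 + lam)}
  have := coord_CL_of_LI h hφ a (s - a)
  rw [add_sub_cancel, repr_I_L h hφ, mul_zero, mul_zero] at this
  push_cast at this
  refine (mul_eq_zero.mp this).resolve_left fun hx => ha (Finset.mem_singleton.mpr ?_)
  rw [eq_div_iff hlam]
  linear_combination -hx

theorem repr_apply_basis_eq_single [Nontrivial G] (h : IsDGHVBasis lam bas)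
    (hφ : IsHalfDerivation ℂ φ) (hlam0 : lam ≠ 0) (hlam1 : lam ≠ 1) (hlamm1 : lam ≠ -1)
    (i : DGHVIdx G) :
    bas.repr (φ (bas i)) = Finsupp.single i (bas.repr (φ (bas (L 0))) (L 0)) := by
  ext j
  rw [Finsupp.single_apply]
  cases i with
  | L b =>
    cases j with
    | L d =>
      split_ifs with hbd
      · cases hbd; exact repr_L_L_self h hφ b
      · exact repr_L_L_of_ne h hφ (by simpa using hbd)
    | I d => simpa using repr_L_I h hφ hlam0 hlam1 b d
    | CL => simpa using repr_L_CL h hφ b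
  | I b =>
    cases j with
    | L d => simpa using repr_I_L h hφ b d
    | I d =>
      split_ifs with hbd
      · cases hbd; exact repr_I_I_self h hφ hlam0 b
      · exact repr_I_I_of_ne h hφ hlam0 (by simpa using hbd)
    | CL => simpa using repr_I_CL h hφ hlamm1 b
  | CL =>
    cases j with
    | L d => simpa using repr_CL_L h hφ d
    | I d => simpa using repr_CL_I h hφ hlam0 d
    | CL => simpa using repr_CL_CL h hφ

end DGHV

theorem halfDerivation_dgHV_is_trivial_general
    (G : AddSubgroup ℂ) [Nontrivial G]
    (lam : ℂ) (hlam0 : lam ≠ 0) (hlam1 : lam ≠ 1) (hlamm1 : lam ≠ -1)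
    (Lg : Type*) [LieRing Lg] [LieAlgebra ℂ Lg]
    (bas : Module.Basis (DGHVIdx G) ℂ Lg)
    (hLL : ∀ a b : G, ⁅bas (DGHVIdx.L a), bas (DGHVIdx.L b)⁆ =
      ((b : ℂ) - (a : ℂ)) • bas (DGHVIdx.L (a + b)) +
        (if a + b = 0 then ((a : ℂ) ^ 3 - (a : ℂ)) / 12 else 0) • bas DGHVIdx.CL)
    (hLI : ∀ a b : G, ⁅bas (DGHVIdx.L a), bas (DGHVIdx.I b)⁆ =
      ((b : ℂ) - lam * (a : ℂ)) • bas (DGHVIdx.I (a + b)))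
    (hII : ∀ a b : G, ⁅bas (DGHVIdx.I a), bas (DGHVIdx.I b)⁆ = 0)
    (hCL : ∀ x : Lg, ⁅bas DGHVIdx.CL, x⁆ = 0)
    (φ : Lg →ₗ[ℂ] Lg)
    (hφ : ∀ x y : Lg, φ ⁅x, y⁆ = (1 / 2 : ℂ) • (⁅φ x, y⁆ + ⁅x, φ y⁆)) :
    ∃ c : ℂ, φ = c • (LinearMap.id : Lg →ₗ[ℂ] Lg) :=
  ⟨_, bas.eq_smul_id_of_repr_eq_single φ _
    (DGHV.repr_apply_basis_eq_single ⟨hLL, hLI, hII, hCL⟩ hφ hlam0 hlam1 hlamm1)⟩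

/-- for `λ ∉ {0, 1, -1, -2}`, every `1/2`-derivation of
`g(G, λ)` is a scalar multiple of the identity. -/
theorem halfDerivation_dgHV_is_trivial
    (G : AddSubgroup ℂ) [Nontrivial G]
    (lam : ℂ) (hlam0 : lam ≠ 0) (hlam1 : lam ≠ 1) (hlamm1 : lam ≠ -1)
    (hlam2 : lam ≠ -2)
    (Lg : Type*) [LieRing Lg] [LieAlgebra ℂ Lg]
    (bas : Module.Basis (DGHVIdx G) ℂ Lg)
    (hLL : ∀ a b : G, ⁅bas (DGHVIdx.L a), bas (DGHVIdx.L b)⁆ =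
      ((b : ℂ) - (a : ℂ)) • bas (DGHVIdx.L (a + b)) +
        (if a + b = 0 then ((a : ℂ) ^ 3 - (a : ℂ)) / 12 else 0) • bas DGHVIdx.CL)
    (hLI : ∀ a b : G, ⁅bas (DGHVIdx.L a), bas (DGHVIdx.I b)⁆ =
      ((b : ℂ) - lam * (a : ℂ)) • bas (DGHVIdx.I (a + b)))
    (hII : ∀ a b : G, ⁅bas (DGHVIdx.I a), bas (DGHVIdx.I b)⁆ = 0)
    (hCL : ∀ x : Lg, ⁅bas DGHVIdx.CL, x⁆ = 0)
    (φ : Lg →ₗ[ℂ] Lg)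
    (hφ : ∀ x y : Lg, φ ⁅x, y⁆ = (1 / 2 : ℂ) • (⁅φ x, y⁆ + ⁅x, φ y⁆)) :
    ∃ c : ℂ, φ = c • (LinearMap.id : Lg →ₗ[ℂ] Lg) :=
  halfDerivation_dgHV_is_trivial_general G lam hlam0 hlam1 hlamm1 Lg bas hLL hLI hII hCL φ hφ
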